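/- arXiv:1901.09089 — 2 statements merged into one kernel-verified Lean document; each statement's English description precedes it below -/
import Mathlib

section
/- The ite connective ite(γ:α,β) has the same truth value as (γ ∧ α) ∨ (¬γ ∧ β) in every model, but in general a strictly smaller support: there exist a model and formulas γ, α, β such that the support of ite(γ:α,β) is a proper subset of the support of (γ ∧ α) ∨ (¬γ ∧ β). -/
/-- Propositional frame-logic formulas over atoms of type `A`:
atoms, conjunction, negation, and if-then-else. -/
inductive Fm (A : Type) where
  | atom : A → Fm A
  | conj : Fm A → Fm A → Fm A
  | neg  : Fm A → Fm A
  | ite  : Fm A → Fm A → Fm A → Fm A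

namespace Fm

variable {A L : Type}

/-- Truth value of a formula in a model given by atom values `v`. -/
def eval (v : A → Bool) : Fm A → Bool
  | .atom a => v a
  | .conj φ ψ => φ.eval v && ψ.eval v
  | .neg φ => !(φ.eval v)
  | .ite γ φ ψ => if γ.eval v then φ.eval v else ψ.eval v

/-- Support of a formula: atoms have given supports `s`; the support of
`ite(γ:α,β)` depends on the truth value of the guard `γ` in the model. -/
def sp (v : A → Bool) (s : A → Set L) : Fm A → Set L
  | .atom a => s a
  | .conj φ ψ => φ.sp v s ∪ ψ.sp v s
  | .neg φ => φ.sp v s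
  | .ite γ φ ψ => γ.sp v s ∪ if γ.eval v then φ.sp v s else ψ.sp v s

/-- Disjunction defined by De Morgan: `φ ∨ ψ := ¬(¬φ ∧ ¬ψ)`. -/
def orr (φ ψ : Fm A) : Fm A := .neg (.conj (.neg φ) (.neg ψ))

end Fm

/-- `ite(γ:α,β)` has the same truth value as `(γ ∧ α) ∨ (¬γ ∧ β)` in every
model, but there are a model and formulas for which its support is a proper
subset of the support of `(γ ∧ α) ∨ (¬γ ∧ β)`. -/
theorem ite_same_truth_strictly_smaller_support :
    (∀ (A : Type) (v : A → Bool) (γ α β : Fm A),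
      (Fm.ite γ α β).eval v = (Fm.orr (.conj γ α) (.conj (.neg γ) β)).eval v) ∧
    (∃ (A L : Type) (v : A → Bool) (s : A → Set L) (γ α β : Fm A),
      (Fm.ite γ α β).sp v s ⊂ (Fm.orr (.conj γ α) (.conj (.neg γ) β)).sp v s) := by
  constructor
  · intro A v γ α β
    simp only [Fm.eval, Fm.orr]
    cases h : γ.eval v <;> simp
  · refine ⟨Bool, ℕ, id, fun b => if b then ∅ else {0}, .atom true, .atom true, .atom false, ?_⟩
    simp only [Fm.sp, Fm.eval, Fm.orr, id]
    constructor
    · intro x hx; simp at hx ⊢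
    · intro h
      have : (0:ℕ) ∈ (∅ : Set ℕ) ∪ if true then (∅ : Set ℕ) else {0} := by
        apply h; simp
      simp at this
end

section
/- For a separating conjunction φ₁ * φ₂ in the PSL fragment satisfiable at store s, the minimal heaps of φ₁ and φ₂ at s are disjoint, and the minimal heap of φ₁ * φ₂ at s equals their disjoint union. -/
/-- Heaps: partial maps from values (locations) to values. -/
abbrev Heap (Val : Type) := Val → Option Val

namespace Heap

variable {Val : Type}

/-- Domain of a heap. -/
def dom (h : Heap Val) : Set Val := {ℓ | h ℓ ≠ none}

/-- Disjointness of heaps. -/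
def Disj (h₁ h₂ : Heap Val) : Prop := ∀ ℓ, h₁ ℓ = none ∨ h₂ ℓ = none

/-- Union of heaps (left-biased; used on disjoint heaps). -/
def union (h₁ h₂ : Heap Val) : Heap Val := fun ℓ => (h₁ ℓ).elim (h₂ ℓ) some

/-- Heap inclusion: `h₁ ⊆ h₂` iff `dom h₁ ⊆ dom h₂` and they agree on `dom h₁`. -/
def sub (h₁ h₂ : Heap Val) : Prop := ∀ ℓ w, h₁ ℓ = some w → h₂ ℓ = some w

/-- Nonempty heap. -/
def Nonempty (h : Heap Val) : Prop := ∃ ℓ, h ℓ ≠ none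

end Heap

/-- The PSL fragment of separation logic: stack formulas, points-to,
if-then-else on stack guards, conjunction, separating conjunction, unary
inductive predicates, and guarded existentials `∃y. (x ↦ y) * φ`. -/
inductive PSL (Var SF Ind : Type) where
  | stack : SF → PSL Var SF Ind
  | pts   : Var → Var → PSL Var SF Ind
  | site  : SF → PSL Var SF Ind → PSL Var SF Ind → PSL Var SF Ind
  | and   : PSL Var SF Ind → PSL Var SF Ind → PSL Var SF Ind
  | star  : PSL Var SF Ind → PSL Var SF Ind → PSL Var SF Ind
  | ind   : Ind → Var → PSL Var SF Ind
  | exq   : Var → Var → PSL Var SF Ind → PSL Var SF Ind  -- `exq y x φ` is `∃y. (x ↦ y) * φ`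

/-- Semantic data: stack formulas depend only on the store; inductive
predicates have unique heaplets. -/
structure PSLModel (Var Val SF Ind : Type) where
  sfSem : SF → (Var → Val) → Prop
  indSem : Ind → Val → Heap Val → Prop
  indUnique : ∀ i v h h', indSem i v h → indSem i v h' → h = h'

variable {Var Val SF Ind : Type}

/-- Separation-logic satisfaction `s, h ⊨ φ` for the PSL fragment. -/
def PSL.sat [DecidableEq Var] (Mo : PSLModel Var Val SF Ind) :
    (Var → Val) → Heap Val → PSL Var SF Ind → Prop
  | s, _, .stack sf => Mo.sfSem sf s
  | s, h, .pts x y => h (s x) = some (s y) ∧ ∀ ℓ, ℓ ≠ s x → h ℓ = none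
  | s, h, .site g φ ψ =>
      (Mo.sfSem g s ∧ PSL.sat Mo s h φ) ∨ (¬ Mo.sfSem g s ∧ PSL.sat Mo s h ψ)
  | s, h, .and φ ψ => PSL.sat Mo s h φ ∧ PSL.sat Mo s h ψ
  | s, h, .star φ ψ => ∃ h₁ h₂, Heap.Disj h₁ h₂ ∧ h = Heap.union h₁ h₂ ∧
      PSL.sat Mo s h₁ φ ∧ PSL.sat Mo s h₂ ψ
  | s, h, .ind i x => Mo.indSem i (s x) h
  | s, h, .exq y x φ => ∃ v h₁ h₂, Heap.Disj h₁ h₂ ∧ h = Heap.union h₁ h₂ ∧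
      (h₁ (Function.update s y v x) = some (Function.update s y v y) ∧
        ∀ ℓ, ℓ ≠ Function.update s y v x → h₁ ℓ = none) ∧
      PSL.sat Mo (Function.update s y v) h₂ φ

/-- `h₀` is the minimal heap of `φ` at store `s`. -/
def IsMinHeap [DecidableEq Var] (Mo : PSLModel Var Val SF Ind)
    (s : Var → Val) (φ : PSL Var SF Ind) (h₀ : Heap Val) : Prop :=
  PSL.sat Mo s h₀ φ ∧ ∀ h', PSL.sat Mo s h' φ → Heap.sub h₀ h'

/-- For a separating conjunction `φ₁ * φ₂` satisfiable at `s`, the minimal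
heaps of `φ₁` and of `φ₂` at `s` are disjoint and the minimal heap of
`φ₁ * φ₂` at `s` is their (disjoint) union. -/
theorem minheap_star [DecidableEq Var]
    (Mo : PSLModel Var Val SF Ind) (s : Var → Val)
    (φ₁ φ₂ : PSL Var SF Ind) (h₁ h₂ : Heap Val)
    (hm₁ : IsMinHeap Mo s φ₁ h₁) (hm₂ : IsMinHeap Mo s φ₂ h₂)
    (hsat : ∃ h : Heap Val, PSL.sat Mo s h (.star φ₁ φ₂)) :
    Heap.Disj h₁ h₂ ∧ IsMinHeap Mo s (.star φ₁ φ₂) (Heap.union h₁ h₂) := by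
  obtain ⟨h, g₁, g₂, hdisj, rfl, hs₁, hs₂⟩ := hsat
  have sub₁ : Heap.sub h₁ g₁ := hm₁.2 g₁ hs₁
  have sub₂ : Heap.sub h₂ g₂ := hm₂.2 g₂ hs₂
  have disj12 : Heap.Disj h₁ h₂ := by
    intro ℓ
    rcases hdisj ℓ with hg | hg
    · left
      cases e : h₁ ℓ with
      | none => rfl
      | some w => exact absurd (sub₁ ℓ w e) (by simp [hg])
    · right
      cases e : h₂ ℓ with
      | none => rfl
      | some w => exact absurd (sub₂ ℓ w e) (by simp [hg])
  refine ⟨disj12, ⟨h₁, h₂, disj12, rfl, hm₁.1, hm₂.1⟩, ?_⟩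
  rintro h' ⟨g₁', g₂', d', rfl, s1', s2'⟩ ℓ w hw
  have sub₁' : Heap.sub h₁ g₁' := hm₁.2 g₁' s1'
  have sub₂' : Heap.sub h₂ g₂' := hm₂.2 g₂' s2'
  cases e : h₁ ℓ with
  | some u =>
    have : Heap.union h₁ h₂ ℓ = some u := by simp [Heap.union, e]
    rw [hw] at this
    obtain rfl : w = u := by injection this.symm with h; exact h.symm
    have := sub₁' ℓ w e
    simp [Heap.union, this]
  | none =>
    have e₂ : h₂ ℓ = some w := by simpa [Heap.union, e] using hw
    have hg₂ := sub₂' ℓ w e₂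
    rcases d' ℓ with hg | hg
    · simp [Heap.union, hg, hg₂]
    · simp [hg] at hg₂
end
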